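/- Let u:Ω→ℝ be continuously differentiable, with u and ∇u extending continuously to the closure of Ω. If E_θ(u)=0, then u∈S(Ω), i.e. u depends only on x₁ or only on x₂. -/

import Mathlib

open MeasureTheory Filter Set
open scoped ENNReal Topology NNReal

noncomputable section

abbrev Euc (n : ℕ) : Type := EuclideanSpace ℝ (Fin n)

/-- Euclidean norm of a point of `ℝ^{n₁} × ℝ^{n₂}`. -/
def prodNorm {n₁ n₂ : ℕ} (z : Euc n₁ × Euc n₂) : ℝ :=
  Real.sqrt (‖z.1‖ ^ 2 + ‖z.2‖ ^ 2)

/-- A radial nonnegative kernel of mass one supported in the unit ball. -/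
structure IsKernel {n₁ n₂ : ℕ} (ρ : Euc n₁ × Euc n₂ → ℝ) : Prop where
  integrable : Integrable ρ volume
  nonneg : ∀ z, 0 ≤ ρ z
  total : (∫ z, ρ z) = 1
  radial : ∀ z w, prodNorm z = prodNorm w → ρ z = ρ w
  support : ∀ z, 1 ≤ prodNorm z → ρ z = 0

/-- A nonempty bounded open connected set. -/
structure GoodDomain {m : ℕ} (Ω : Set (Euc m)) : Prop where
  nonempty : Ω.Nonempty
  isOpen : IsOpen Ω
  connected : IsConnected Ω
  bounded : Bornology.IsBounded Ω

/-- `Ω^ε := ⋂_{|z|<ε} (Ω - z)`. -/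
def tube {m : ℕ} (Ω : Set (Euc m)) (ε : ℝ) : Set (Euc m) :=
  {x | ∀ z : Euc m, ‖z‖ < ε → x + z ∈ Ω}

/-- The localized energy `E_{ε,p}^{θ₁,θ₂}(u)`. -/
def Eeps {n₁ n₂ : ℕ} (ρ : Euc n₁ × Euc n₂ → ℝ) (Ω₁ : Set (Euc n₁)) (Ω₂ : Set (Euc n₂))
    (θ₁ θ₂ p ε : ℝ) (u : Euc n₁ × Euc n₂ → ℝ) : ℝ≥0∞ :=
  ∫⁻ z : Euc n₁ × Euc n₂,
    ENNReal.ofReal ((ε ^ (n₁ + n₂))⁻¹ * ρ (ε⁻¹ • z)) *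
      (∫⁻ x in (tube Ω₁ ε) ×ˢ (tube Ω₂ ε),
        ENNReal.ofReal
          (|u (x.1 + z.1, x.2) - u x| ^ θ₁ * |u (x.1, x.2 + z.2) - u x| ^ θ₂
            / prodNorm z ^ p))

/-- The energy `E_p^{θ₁,θ₂}(u) = liminf_{ε→0⁺} E_{ε,p}(u)`. -/
def Energy {n₁ n₂ : ℕ} (ρ : Euc n₁ × Euc n₂ → ℝ) (Ω₁ : Set (Euc n₁)) (Ω₂ : Set (Euc n₂))
    (θ₁ θ₂ p : ℝ) (u : Euc n₁ × Euc n₂ → ℝ) : ℝ≥0∞ :=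
  Filter.liminf (fun ε => Eeps ρ Ω₁ Ω₂ θ₁ θ₂ p ε u) (𝓝[>] (0 : ℝ))

/-- `u ∈ S(Ω)` : `u` depends a.e. only on `x₁` or only on `x₂`. -/
def memS {n₁ n₂ : ℕ} (Ω₁ : Set (Euc n₁)) (Ω₂ : Set (Euc n₂))
    (u : Euc n₁ × Euc n₂ → ℝ) : Prop :=
  (∃ u₁ : Euc n₁ → ℝ, Measurable u₁ ∧
      ∀ᵐ x ∂(volume.restrict (Ω₁ ×ˢ Ω₂)), u x = u₁ x.1) ∨
  (∃ u₂ : Euc n₂ → ℝ, Measurable u₂ ∧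
      ∀ᵐ x ∂(volume.restrict (Ω₁ ×ˢ Ω₂)), u x = u₂ x.2)

/-- The critical exponent `P(θ₁,θ₂)`. -/
def Pexp (θ₁ θ₂ : ℝ) : ℝ :=
  if θ₁ + θ₂ ≤ 1 then 2
  else if min θ₁ θ₂ ≤ 1 then 1 + (θ₁ + θ₂)
  else min θ₁ θ₂ + (θ₁ + θ₂)

/-- The cross second derivative `∂_{x₁,i} ∂_{x₂,j} φ (x)`. -/
def crossD {n₁ n₂ : ℕ} (φ : Euc n₁ × Euc n₂ → ℝ) (i : Fin n₁) (j : Fin n₂)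
    (x : Euc n₁ × Euc n₂) : ℝ :=
  fderiv ℝ (fun y => fderiv ℝ φ y ((0 : Euc n₁), EuclideanSpace.single j 1)) x
    (EuclideanSpace.single i 1, (0 : Euc n₂))

/-- The quantity `q(x,z)` from the paper. -/
def qfun {n₁ n₂ : ℕ} (θ₁ θ₂ : ℝ) (u : Euc n₁ × Euc n₂ → ℝ)
    (z x : Euc n₁ × Euc n₂) : ℝ :=
  (|u (x.1 + z.1, x.2 + z.2) - u (x.1, x.2 + z.2)| ^ θ₁
      + |u (x.1 + z.1, x.2) - u x| ^ θ₁) *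
  (|u (x.1 + z.1, x.2 + z.2) - u (x.1 + z.1, x.2)| ^ θ₂
      + |u (x.1, x.2 + z.2) - u x| ^ θ₂)

/-!
If at some point `x₀` both partial gradients `∂₁u` and `∂₂u` were nonzero, then for `z` in an
open cone of directions both increments `|u(x + z₁) - u(x)|` and `|u(x + z₂) - u(x)|` are at
least a multiple of `|z|` near `x₀`; with `p = θ₁ + θ₂` the integrand of `E_{ε,p}` is then bounded
below independently of `ε`, and a radial kernel gives the cone a fixed positive mass at every
scale, so `E_θ(u) > 0`. Hence at each point one of the partial gradients vanishes. Where `∂₁u ≠ 0`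
we have `∂₂u = 0` nearby, so `∂₁u` is constant along the slices `{x₁} × Ω₂`, and symmetrically;
a point `p` with `∂₁u ≠ 0` and a point `a` with `∂₂u ≠ 0` would make both nonzero at `(p₁, a₂)`.
So `∂₁u ≡ 0` or `∂₂u ≡ 0` on `Ω`, and connectedness of the factors finishes the proof.
-/

theorem IsPreconnected.eq_of_eventuallyEq_of_ne {X Y : Type*} [TopologicalSpace X]
    [TopologicalSpace Y] [T1Space Y] {U : Set X} (hU : IsPreconnected U) (hUo : IsOpen U)
    {f : X → Y} {y₀ : Y} (hf : ContinuousOn f U)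
    (hloc : ∀ x ∈ U, f x ≠ y₀ → ∀ᶠ x' in 𝓝 x, f x' = f x)
    {x x' : X} (hx : x ∈ U) (hx' : x' ∈ U) : f x = f x' := by
  suffices key : ∀ x ∈ U, f x ≠ y₀ → ∀ x' ∈ U, f x' = f x by
    by_cases h : f x = y₀
    · by_cases h' : f x' = y₀
      · rw [h, h']
      · exact key x' hx' h' x hx
    · exact (key x hx h x' hx').symm
  intro x hx hne x' hx'
  by_contra hne'
  let A : Set X := {y | ∀ᶠ y' in 𝓝 y, f y' = f x}
  let B : Set X := U ∩ f ⁻¹' {f x}ᶜ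
  have hcover : U ⊆ A ∪ B := fun y hy => by
    by_cases hfy : f y = f x
    · left
      filter_upwards [hloc y hy (hfy ▸ hne)] with y' hy' using hy'.trans hfy
    · exact Or.inr ⟨hy, hfy⟩
  obtain ⟨y, -, hyA, -, hyB⟩ := hU A B isOpen_setOfPred_eventually_nhds
    (hf.isOpen_inter_preimage hUo isOpen_compl_singleton) hcover
    ⟨x, hx, (hloc x hx hne).mono fun _ h => h⟩ ⟨x', hx', hx', hne'⟩
  exact hyB hyA.self_of_nhds

theorem eq_of_partial_snd_eq_zero {α E₂ G : Type*} [NormedAddCommGroup E₂] [NormedSpace ℝ E₂]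
    [NormedAddCommGroup G] [NormedSpace ℝ G] {U₁ : Set α} {U₂ : Set E₂} {u : α × E₂ → G}
    {d₂ : α × E₂ → E₂ →L[ℝ] G} (hU₂ : IsOpen U₂) (hU₂c : IsPreconnected U₂)
    (hd₂ : ∀ x ∈ U₁ ×ˢ U₂, HasFDerivAt (fun y => u (x.1, y)) (d₂ x) x.2)
    (hd₂0 : ∀ x ∈ U₁ ×ˢ U₂, d₂ x = 0) {b : E₂} (hb : b ∈ U₂) :
    ∀ x ∈ U₁ ×ˢ U₂, u x = u (x.1, b) := by
  rintro ⟨x₁, y⟩ ⟨hx₁, hy⟩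
  refine hU₂.is_const_of_fderiv_eq_zero (f := fun y => u (x₁, y)) hU₂c
    (fun y hy => (hd₂ (x₁, y) ⟨hx₁, hy⟩).differentiableAt.differentiableWithinAt)
    (fun y hy => ?_) hy hb
  rw [(hd₂ (x₁, y) ⟨hx₁, hy⟩).fderiv, hd₂0 (x₁, y) ⟨hx₁, hy⟩, Pi.zero_apply]

theorem eq_of_partial_fst_eq_zero {E₁ β G : Type*} [NormedAddCommGroup E₁] [NormedSpace ℝ E₁]
    [NormedAddCommGroup G] [NormedSpace ℝ G] {U₁ : Set E₁} {U₂ : Set β} {u : E₁ × β → G}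
    {d₁ : E₁ × β → E₁ →L[ℝ] G} (hU₁ : IsOpen U₁) (hU₁c : IsPreconnected U₁)
    (hd₁ : ∀ x ∈ U₁ ×ˢ U₂, HasFDerivAt (fun y => u (y, x.2)) (d₁ x) x.1)
    (hd₁0 : ∀ x ∈ U₁ ×ˢ U₂, d₁ x = 0) {b : E₁} (hb : b ∈ U₁) :
    ∀ x ∈ U₁ ×ˢ U₂, u x = u (b, x.2) := fun x hx =>
  eq_of_partial_snd_eq_zero (u := u ∘ Prod.swap) (d₂ := d₁ ∘ Prod.swap) hU₁ hU₁c
    (fun y hy => hd₁ y.swap ⟨hy.2, hy.1⟩) (fun y hy => hd₁0 y.swap ⟨hy.2, hy.1⟩) hb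
    x.swap ⟨hx.2, hx.1⟩

section Slices

variable {E₁ E₂ G : Type*} [NormedAddCommGroup E₁] [NormedSpace ℝ E₁]
  [NormedAddCommGroup E₂] [NormedSpace ℝ E₂] [NormedAddCommGroup G] [NormedSpace ℝ G]
  {U₁ : Set E₁} {U₂ : Set E₂} {u : E₁ × E₂ → G}
  {d₁ : E₁ × E₂ → E₁ →L[ℝ] G} {d₂ : E₁ × E₂ → E₂ →L[ℝ] G}

theorem partial_fst_eq_of_dichotomy (hU₁ : IsOpen U₁) (hU₂ : IsOpen U₂)
    (hU₂c : IsPreconnected U₂)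
    (hd₁ : ∀ x ∈ U₁ ×ˢ U₂, HasFDerivAt (fun y => u (y, x.2)) (d₁ x) x.1)
    (hd₂ : ∀ x ∈ U₁ ×ˢ U₂, HasFDerivAt (fun y => u (x.1, y)) (d₂ x) x.2)
    (hd₁c : ContinuousOn d₁ (U₁ ×ˢ U₂)) (hdich : ∀ x ∈ U₁ ×ˢ U₂, d₁ x = 0 ∨ d₂ x = 0)
    {x₁ : E₁} (hx₁ : x₁ ∈ U₁) {y y' : E₂} (hy : y ∈ U₂) (hy' : y' ∈ U₂) :
    d₁ (x₁, y) = d₁ (x₁, y') := by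
  have hcont : ContinuousOn (fun y => d₁ (x₁, y)) U₂ :=
    hd₁c.comp (continuous_const.prodMk continuous_id).continuousOn fun y hy => ⟨hx₁, hy⟩
  refine hU₂c.eq_of_eventuallyEq_of_ne (y₀ := 0) hU₂ hcont (fun y hy hne => ?_) hy hy'
  have hO : IsOpen ((U₁ ×ˢ U₂) ∩ d₁ ⁻¹' {0}ᶜ) :=
    hd₁c.isOpen_inter_preimage (hU₁.prod hU₂) isOpen_compl_singleton
  obtain ⟨s, hs, hball⟩ := Metric.isOpen_iff.1 hO (x₁, y) ⟨⟨hx₁, hy⟩, hne⟩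
  have hball' : ∀ q₁ ∈ Metric.ball x₁ s, ∀ q₂ ∈ Metric.ball y s,
      (q₁, q₂) ∈ (U₁ ×ˢ U₂) ∩ d₁ ⁻¹' {0}ᶜ := fun q₁ hq₁ q₂ hq₂ =>
    hball (by rw [← ball_prod_same]; exact ⟨hq₁, hq₂⟩)
  have hloc : ∀ q₁ ∈ Metric.ball x₁ s, ∀ q₂ ∈ Metric.ball y s, u (q₁, q₂) = u (q₁, y) := by
    intro q₁ hq₁ q₂ hq₂
    have hderiv : ∀ q ∈ Metric.ball y s, HasFDerivAt (fun y => u (q₁, y)) 0 q := fun q hq => by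
      obtain ⟨hqU, hq0⟩ := hball' q₁ hq₁ q hq
      simpa [(hdich _ hqU).resolve_left hq0] using hd₂ _ hqU
    exact Metric.isOpen_ball.is_const_of_fderiv_eq_zero (convex_ball y s).isPreconnected
      (fun q hq => (hderiv q hq).differentiableAt.differentiableWithinAt)
      (fun q hq => (hderiv q hq).fderiv) hq₂ (Metric.mem_ball_self hs)
  filter_upwards [Metric.ball_mem_nhds y hs] with y' hy'
  have hslice : (fun q => u (q, y')) =ᶠ[𝓝 x₁] fun q => u (q, y) := by
    filter_upwards [Metric.ball_mem_nhds x₁ hs] with q hq using hloc q hq y' hy'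
  exact (hd₁ _ (hball' x₁ (Metric.mem_ball_self hs) y' hy').1).unique
    ((hd₁ _ ⟨hx₁, hy⟩).congr_of_eventuallyEq hslice)

theorem partial_eq_zero_of_dichotomy (hU₁ : IsOpen U₁) (hU₂ : IsOpen U₂)
    (hU₁c : IsPreconnected U₁) (hU₂c : IsPreconnected U₂)
    (hd₁ : ∀ x ∈ U₁ ×ˢ U₂, HasFDerivAt (fun y => u (y, x.2)) (d₁ x) x.1)
    (hd₂ : ∀ x ∈ U₁ ×ˢ U₂, HasFDerivAt (fun y => u (x.1, y)) (d₂ x) x.2)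
    (hd₁c : ContinuousOn d₁ (U₁ ×ˢ U₂)) (hd₂c : ContinuousOn d₂ (U₁ ×ˢ U₂))
    (hdich : ∀ x ∈ U₁ ×ˢ U₂, d₁ x = 0 ∨ d₂ x = 0) :
    (∀ x ∈ U₁ ×ˢ U₂, d₁ x = 0) ∨ (∀ x ∈ U₁ ×ˢ U₂, d₂ x = 0) := by
  by_contra! ⟨⟨p, hp, hp0⟩, ⟨a, ha, ha0⟩⟩
  have hswap : ∀ x ∈ U₂ ×ˢ U₁, x.swap ∈ U₁ ×ˢ U₂ := fun x hx => ⟨hx.2, hx.1⟩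
  have h₁ : d₁ (p.1, a.2) = d₁ p := partial_fst_eq_of_dichotomy hU₁ hU₂ hU₂c hd₁ hd₂ hd₁c
    hdich hp.1 ha.2 hp.2
  have h₂ : d₂ (p.1, a.2) = d₂ a := partial_fst_eq_of_dichotomy (u := u ∘ Prod.swap)
    (d₁ := d₂ ∘ Prod.swap) (d₂ := d₁ ∘ Prod.swap) hU₂ hU₁ hU₁c
    (fun x hx => hd₂ x.swap (hswap x hx)) (fun x hx => hd₁ x.swap (hswap x hx))
    (hd₂c.comp continuous_swap.continuousOn hswap) (fun x hx => (hdich _ (hswap x hx)).symm)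
    ha.2 hp.1 ha.1
  rcases hdich (p.1, a.2) ⟨hp.1, ha.2⟩ with h | h
  · exact hp0 (h₁ ▸ h)
  · exact ha0 (h₂ ▸ h)

end Slices

section Cone

variable {E : Type*} [NormedAddCommGroup E] [InnerProductSpace ℝ E] [FiniteDimensional ℝ E]
  [MeasurableSpace E] [BorelSpace E]

/-- Each `x ≠ 0` lies in the image of `V` under a reflection, which preserves `f` and volume;
countably many of these images cover `E \ {0}`. -/
theorem setLIntegral_ne_zero_of_isOpen_cone {f : E → ℝ≥0∞}
    (hrad : ∀ x y, ‖x‖ = ‖y‖ → f x = f y) (hf : ∫⁻ x, f x ≠ 0) {V : Set E} (hV : IsOpen V)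
    (hcone : ∀ t : ℝ, 0 < t → ∀ v ∈ V, t • v ∈ V) {v₀ : E} (hv₀ : v₀ ∈ V) (hv₀0 : v₀ ≠ 0) :
    ∫⁻ x in V, f x ≠ 0 := by
  intro hV0
  have : Nontrivial E := nontrivial_of_ne v₀ 0 hv₀0
  let R : E → E ≃ₗᵢ[ℝ] E := fun x => Submodule.reflection (ℝ ∙ ((‖x‖ / ‖v₀‖) • v₀ - x))ᗮ
  have hR : ∀ x ∈ ({0}ᶜ : Set E), x ∈ ⋃ y, R y '' V := fun x hx =>
    mem_iUnion.2 ⟨x, _, hcone _ (div_pos (norm_pos_iff.2 hx) (norm_pos_iff.2 hv₀0)) _ hv₀,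
      Submodule.reflection_sub (by simp [norm_smul, hv₀0])⟩
  have hRV : ∀ y, ∫⁻ x in R y '' V, f x = 0 := fun y => by
    rw [← (R y).measurePreserving.setLIntegral_comp_emb
      (R y).toHomeomorph.measurableEmbedding, ← hV0]
    exact setLIntegral_congr_fun hV.measurableSet fun x _ => hrad _ _ ((R y).norm_map x)
  obtain ⟨T, hT, hTU⟩ := TopologicalSpace.isOpen_iUnion_countable (fun y => R y '' V)
    fun y => (R y).toHomeomorph.isOpen_image.2 hV
  have : Countable T := hT.to_subtype
  have hcompl : ∫⁻ x in {0}ᶜ, f x = 0 := by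
    refine le_antisymm ?_ zero_le
    calc ∫⁻ x in {0}ᶜ, f x ≤ ∫⁻ x in ⋃ y : T, R y '' V, f x := by
          refine lintegral_mono_set ?_
          rw [iUnion_subtype (· ∈ T) fun y => R y '' V, hTU]
          exact hR
      _ ≤ ∑' y : T, ∫⁻ x in R y '' V, f x := lintegral_iUnion_le _ _
      _ = 0 := by simp [hRV]
  apply hf
  rw [← lintegral_add_compl _ (measurableSet_singleton 0),
    setLIntegral_measure_zero _ _ (measure_singleton 0), hcompl, add_zero]

end Cone

variable {n₁ n₂ : ℕ}

theorem prodNorm_eq_norm_toLp (z : Euc n₁ × Euc n₂) : prodNorm z = ‖WithLp.toLp 2 z‖ := by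
  rw [WithLp.prod_norm_eq_of_L2, prodNorm]
  rfl

theorem continuous_prodNorm : Continuous (prodNorm : Euc n₁ × Euc n₂ → ℝ) := by
  simp_rw [funext prodNorm_eq_norm_toLp]
  exact (WithLp.prod_continuous_toLp 2 _ _).norm

theorem prodNorm_smul (t : ℝ) (z : Euc n₁ × Euc n₂) : prodNorm (t • z) = |t| * prodNorm z := by
  simp [prodNorm_eq_norm_toLp, WithLp.toLp_smul, norm_smul]

theorem prodNorm_pos {z : Euc n₁ × Euc n₂} (hz : z ≠ 0) : 0 < prodNorm z := by
  simpa [prodNorm_eq_norm_toLp] using hz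

theorem norm_fst_le_prodNorm (z : Euc n₁ × Euc n₂) : ‖z.1‖ ≤ prodNorm z :=
  (le_abs_self _).trans (Real.abs_le_sqrt (le_add_of_nonneg_right (sq_nonneg _)))

theorem norm_snd_le_prodNorm (z : Euc n₁ × Euc n₂) : ‖z.2‖ ≤ prodNorm z :=
  (le_abs_self _).trans (Real.abs_le_sqrt (le_add_of_nonneg_left (sq_nonneg _)))

instance : (volume : Measure (Euc n₁ × Euc n₂)).IsAddHaarMeasure :=
  Measure.prod.instIsAddHaarMeasure _ _

theorem setLIntegral_rescale_of_cone {E : Type*} [NormedAddCommGroup E] [NormedSpace ℝ E]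
    [MeasurableSpace E] [BorelSpace E] [FiniteDimensional ℝ E] (μ : Measure E)
    [μ.IsAddHaarMeasure] (ρ : E → ℝ) {C : Set E}
    (hcone : ∀ t : ℝ, 0 < t → ∀ z, t • z ∈ C ↔ z ∈ C) {ε : ℝ} (hε : 0 < ε) :
    ∫⁻ z in C, ENNReal.ofReal ((ε ^ Module.finrank ℝ E)⁻¹ * ρ (ε⁻¹ • z)) ∂μ =
      ∫⁻ z in C, ENNReal.ofReal (ρ z) ∂μ := by
  have hε' : ε⁻¹ ≠ 0 := inv_ne_zero hε.ne'
  have hemb : MeasurableEmbedding (ε⁻¹ • · : E → E) :=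
    (Homeomorph.smulOfNeZero _ hε').measurableEmbedding
  have hpre : (ε⁻¹ • · : E → E) ⁻¹' C = C := ext fun z => hcone _ (inv_pos.2 hε) z
  have hscale : ∫⁻ z in C, ENNReal.ofReal (ρ (ε⁻¹ • z)) ∂μ =
      ENNReal.ofReal (ε ^ Module.finrank ℝ E) * ∫⁻ z in C, ENNReal.ofReal (ρ z) ∂μ := by
    calc ∫⁻ z in C, ENNReal.ofReal (ρ (ε⁻¹ • z)) ∂μ
        = ∫⁻ z in C, ENNReal.ofReal (ρ z) ∂(μ.map (ε⁻¹ • ·)) := by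
          conv_lhs => rw [← hpre]
          exact MeasurePreserving.setLIntegral_comp_preimage_emb ⟨hemb.measurable, rfl⟩ hemb
            (fun z => ENNReal.ofReal (ρ z)) C
      _ = _ := by
          rw [Measure.map_addHaar_smul μ hε', Measure.restrict_smul, lintegral_smul_measure,
            inv_pow, inv_inv, abs_of_pos (by positivity), smul_eq_mul]
  simp_rw [ENNReal.ofReal_mul (inv_nonneg.2 (pow_nonneg hε.le _))]
  rw [lintegral_const_mul' _ _ ENNReal.ofReal_ne_top, hscale, ← mul_assoc,
    ← ENNReal.ofReal_mul (by positivity), inv_mul_cancel₀ (by positivity), ENNReal.ofReal_one,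
    one_mul]

theorem setLIntegral_ne_zero_of_isOpen_cone_prod {f : Euc n₁ × Euc n₂ → ℝ≥0∞}
    (hrad : ∀ z w, prodNorm z = prodNorm w → f z = f w) (hf : ∫⁻ z, f z ≠ 0)
    {C : Set (Euc n₁ × Euc n₂)} (hC : IsOpen C)
    (hcone : ∀ t : ℝ, 0 < t → ∀ z ∈ C, t • z ∈ C) {z₀ : Euc n₁ × Euc n₂} (hz₀ : z₀ ∈ C)
    (hz₀0 : z₀ ≠ 0) : ∫⁻ z in C, f z ≠ 0 := by
  have hmp := WithLp.volume_preserving_ofLp (Euc n₁) (Euc n₂)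
  have hemb := (MeasurableEquiv.toLp 2 (Euc n₁ × Euc n₂)).symm.measurableEmbedding
  rw [← hmp.setLIntegral_comp_preimage_emb hemb]
  refine setLIntegral_ne_zero_of_isOpen_cone (fun x y hxy => hrad _ _ ?_) ?_
    (hC.preimage (WithLp.prod_continuous_ofLp 2 _ _)) (fun t ht w hw => hcone t ht _ hw)
    (v₀ := WithLp.toLp 2 z₀) hz₀ (by simpa using hz₀0)
  · simpa [prodNorm_eq_norm_toLp] using hxy
  · rwa [hmp.lintegral_comp_emb hemb]

def partialCone (L : Euc n₁ × Euc n₂ →L[ℝ] ℝ) (c : ℝ) : Set (Euc n₁ × Euc n₂) :=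
  {z | c * prodNorm z < |L (z.1, 0)| ∧ c * prodNorm z < |L (0, z.2)|}

theorem isOpen_partialCone (L : Euc n₁ × Euc n₂ →L[ℝ] ℝ) (c : ℝ) :
    IsOpen (partialCone L c) := by
  have hc : Continuous fun z : Euc n₁ × Euc n₂ => c * prodNorm z :=
    continuous_const.mul continuous_prodNorm
  exact (isOpen_lt hc (by fun_prop)).inter (isOpen_lt hc (by fun_prop))

theorem smul_mem_partialCone_iff (L : Euc n₁ × Euc n₂ →L[ℝ] ℝ) (c : ℝ) {t : ℝ} (ht : 0 < t)
    (z : Euc n₁ × Euc n₂) : t • z ∈ partialCone L c ↔ z ∈ partialCone L c := by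
  have h₁ : L ((t • z).1, 0) = t * L (z.1, 0) := by
    rw [← smul_eq_mul, ← L.map_smul]; simp
  have h₂ : L (0, (t • z).2) = t * L (0, z.2) := by
    rw [← smul_eq_mul, ← L.map_smul]; simp
  simp only [partialCone, mem_ofPred_eq, prodNorm_smul, h₁, h₂, abs_mul, abs_of_pos ht,
    mul_left_comm c t, mul_lt_mul_iff_right₀ ht]

theorem exists_mk_mem_partialCone {L : Euc n₁ × Euc n₂ →L[ℝ] ℝ} {v : Euc n₁} {w : Euc n₂}
    (hv : L (v, 0) ≠ 0) (hw : L (0, w) ≠ 0) : ∃ c > 0, (v, w) ∈ partialCone L c := by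
  obtain ⟨c, hc, hlt⟩ :=
    exists_pos_mul_lt (lt_min (abs_pos.2 hv) (abs_pos.2 hw)) (prodNorm (v, w))
  rw [mul_comm] at hlt
  exact ⟨c, hc, hlt.trans_le (min_le_left _ _), hlt.trans_le (min_le_right _ _)⟩

theorem abs_sub_ge_of_norm_fderiv_sub_le {E : Type*} [NormedAddCommGroup E] [NormedSpace ℝ E]
    {u : E → ℝ} {g : E → E →L[ℝ] ℝ} {s : Set E} (hs : Convex ℝ s)
    (hu : ∀ x ∈ s, HasFDerivAt u (g x) x) {L : E →L[ℝ] ℝ} {δ : ℝ} (hg : ∀ x ∈ s, ‖g x - L‖ ≤ δ)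
    {x y : E} (hx : x ∈ s) (hy : y ∈ s) : |L (y - x)| - δ * ‖y - x‖ ≤ |u y - u x| := by
  have hmvt := hs.norm_image_sub_le_of_norm_hasFDerivWithin_le'
    (fun z hz => (hu z hz).hasFDerivWithinAt) hg hx hy
  have htri := abs_sub_abs_le_abs_sub (L (y - x)) (u y - u x)
  rw [Real.norm_eq_abs, abs_sub_comm] at hmvt
  linarith

theorem rpow_add_le_mul_rpow_div {a s A B θ₁ θ₂ : ℝ} (ha : 0 < a) (hs : 0 < s)
    (hθ₁ : 0 ≤ θ₁) (hθ₂ : 0 ≤ θ₂) (hA : a * s ≤ A) (hB : a * s ≤ B) :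
    a ^ (θ₁ + θ₂) ≤ A ^ θ₁ * B ^ θ₂ / s ^ (θ₁ + θ₂) := by
  rw [le_div_iff₀ (by positivity), ← Real.mul_rpow ha.le hs.le, Real.rpow_add (by positivity)]
  exact mul_le_mul (Real.rpow_le_rpow (by positivity) hA hθ₁)
    (Real.rpow_le_rpow (by positivity) hB hθ₂) (by positivity)
    (Real.rpow_nonneg ((mul_pos ha hs).le.trans hA) _)

theorem add_mem_ball_two_mul {E : Type*} [SeminormedAddCommGroup E] {x₀ x h : E} {r : ℝ}
    (hx : x ∈ Metric.ball x₀ r) (hh : ‖h‖ < r) : x + h ∈ Metric.ball x₀ (2 * r) := by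
  rw [Metric.mem_ball, dist_eq_norm] at hx ⊢
  calc ‖x + h - x₀‖ = ‖(x - x₀) + h‖ := by rw [sub_add_eq_add_sub]
    _ ≤ ‖x - x₀‖ + ‖h‖ := norm_add_le _ _
    _ < 2 * r := by linarith

theorem tube_anti {m : ℕ} (Ω : Set (Euc m)) {ε ε' : ℝ} (h : ε ≤ ε') : tube Ω ε' ⊆ tube Ω ε :=
  fun _ hx z hz => hx z (hz.trans_le h)

theorem rpow_le_integrand_of_mem_partialCone {u : Euc n₁ × Euc n₂ → ℝ}
    {g : Euc n₁ × Euc n₂ → (Euc n₁ × Euc n₂ →L[ℝ] ℝ)} {x₀ : Euc n₁ × Euc n₂} {r c : ℝ}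
    (hball : ∀ x ∈ Metric.ball x₀ (2 * r), HasFDerivAt u (g x) x ∧ ‖g x - g x₀‖ ≤ c / 2)
    (hc : 0 < c) {θ₁ θ₂ : ℝ} (hθ₁ : 0 ≤ θ₁) (hθ₂ : 0 ≤ θ₂) {z : Euc n₁ × Euc n₂}
    (hz : z ∈ partialCone (g x₀) c) (hzr : prodNorm z < r) {x : Euc n₁ × Euc n₂}
    (hx : x ∈ Metric.ball x₀ r) :
    (c / 2) ^ (θ₁ + θ₂) ≤ |u (x.1 + z.1, x.2) - u x| ^ θ₁ * |u (x.1, x.2 + z.2) - u x| ^ θ₂ /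
      prodNorm z ^ (θ₁ + θ₂) := by
  have hz0 : z ≠ 0 := by
    rintro rfl
    simpa [partialCone, prodNorm, Prod.mk_zero_zero] using hz.1
  have hinc : ∀ h : Euc n₁ × Euc n₂, ‖h‖ ≤ prodNorm z → c * prodNorm z < |g x₀ h| →
      c / 2 * prodNorm z ≤ |u (x + h) - u x| := fun h hh hLh => by
    have hxB : x ∈ Metric.ball x₀ (2 * r) :=
      Metric.ball_subset_ball (by linarith [Metric.pos_of_mem_ball hx]) hx
    have := abs_sub_ge_of_norm_fderiv_sub_le (convex_ball x₀ (2 * r))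
      (fun y hy => (hball y hy).1) (fun y hy => (hball y hy).2) hxB
      (add_mem_ball_two_mul hx (hh.trans_lt hzr))
    rw [add_sub_cancel_left] at this
    nlinarith [norm_nonneg h]
  refine rpow_add_le_mul_rpow_div (by positivity) (prodNorm_pos hz0) hθ₁ hθ₂ ?_ ?_
  · have := hinc (z.1, 0) (by simpa using norm_fst_le_prodNorm z) hz.1
    rwa [show x + (z.1, 0) = (x.1 + z.1, x.2) from Prod.ext rfl (add_zero _)] at this
  · have := hinc (0, z.2) (by simpa using norm_snd_le_prodNorm z) hz.2
    rwa [show x + (0, z.2) = (x.1, x.2 + z.2) from Prod.ext (add_zero _) rfl] at this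

theorem le_eeps_of_forall_le {ρ : Euc n₁ × Euc n₂ → ℝ}
    (hρ : ∀ z, 1 ≤ prodNorm z → ρ z = 0) {Ω₁ : Set (Euc n₁)} {Ω₂ : Set (Euc n₂)}
    {θ₁ θ₂ p : ℝ} {u : Euc n₁ × Euc n₂ → ℝ} {C D : Set (Euc n₁ × Euc n₂)} (hC : MeasurableSet C)
    (hDm : MeasurableSet D) (hcone : ∀ t : ℝ, 0 < t → ∀ z, t • z ∈ C ↔ z ∈ C) {ε₀ κ : ℝ}
    (hD : D ⊆ tube Ω₁ ε₀ ×ˢ tube Ω₂ ε₀)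
    (hbound : ∀ z ∈ C, prodNorm z < ε₀ → ∀ x ∈ D,
      κ ≤ |u (x.1 + z.1, x.2) - u x| ^ θ₁ * |u (x.1, x.2 + z.2) - u x| ^ θ₂ / prodNorm z ^ p)
    {ε : ℝ} (hε : 0 < ε) (hεε₀ : ε ≤ ε₀) :
    (∫⁻ z in C, ENNReal.ofReal (ρ z)) * (ENNReal.ofReal κ * volume D) ≤
      Eeps ρ Ω₁ Ω₂ θ₁ θ₂ p ε u := by
  set ρε : Euc n₁ × Euc n₂ → ℝ≥0∞ := fun z => ENNReal.ofReal ((ε ^ (n₁ + n₂))⁻¹ * ρ (ε⁻¹ • z))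
  have hpoint : ∀ z ∈ C, ρε z * (ENNReal.ofReal κ * volume D) ≤ ρε z *
      ∫⁻ x in tube Ω₁ ε ×ˢ tube Ω₂ ε, ENNReal.ofReal
        (|u (x.1 + z.1, x.2) - u x| ^ θ₁ * |u (x.1, x.2 + z.2) - u x| ^ θ₂ / prodNorm z ^ p) := by
    intro z hz
    by_cases hzε : prodNorm z < ε
    · gcongr
      calc ENNReal.ofReal κ * volume D = ∫⁻ _ in D, ENNReal.ofReal κ :=
            (setLIntegral_const _ _).symm
        _ ≤ _ := setLIntegral_mono' hDm fun x hx =>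
            ENNReal.ofReal_le_ofReal (hbound z hz (hzε.trans_le hεε₀) x hx)
        _ ≤ _ := lintegral_mono_set
            (hD.trans (prod_mono (tube_anti Ω₁ hεε₀) (tube_anti Ω₂ hεε₀)))
    · have : ρ (ε⁻¹ • z) = 0 := hρ _ <| by
        rw [prodNorm_smul, abs_of_pos (inv_pos.2 hε), ← div_eq_inv_mul, one_le_div hε]
        exact not_lt.1 hzε
      simp [ρε, this]
  calc (∫⁻ z in C, ENNReal.ofReal (ρ z)) * (ENNReal.ofReal κ * volume D)
      = (∫⁻ z in C, ρε z) * (ENNReal.ofReal κ * volume D) := by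
        rw [← setLIntegral_rescale_of_cone volume ρ hcone hε, Module.finrank_prod,
          finrank_euclideanSpace_fin, finrank_euclideanSpace_fin]
    _ ≤ ∫⁻ z in C, ρε z * (ENNReal.ofReal κ * volume D) := lintegral_mul_const_le _ _
    _ ≤ ∫⁻ z in C, ρε z * ∫⁻ x in tube Ω₁ ε ×ˢ tube Ω₂ ε, ENNReal.ofReal
        (|u (x.1 + z.1, x.2) - u x| ^ θ₁ * |u (x.1, x.2 + z.2) - u x| ^ θ₂ / prodNorm z ^ p) :=
        setLIntegral_mono' hC hpoint
    _ ≤ Eeps ρ Ω₁ Ω₂ θ₁ θ₂ p ε u := setLIntegral_le_lintegral _ _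

theorem energy_ne_zero_of_partials_ne_zero {Ω₁ : Set (Euc n₁)} {Ω₂ : Set (Euc n₂)}
    {ρ : Euc n₁ × Euc n₂ → ℝ} (hρ : IsKernel ρ) {θ₁ θ₂ : ℝ} (hθ₁ : 0 ≤ θ₁) (hθ₂ : 0 ≤ θ₂)
    {u : Euc n₁ × Euc n₂ → ℝ} {g : Euc n₁ × Euc n₂ → (Euc n₁ × Euc n₂ →L[ℝ] ℝ)}
    {x₀ : Euc n₁ × Euc n₂} (hΩ : Ω₁ ×ˢ Ω₂ ∈ 𝓝 x₀)
    (hderiv : ∀ᶠ x in 𝓝 x₀, HasFDerivAt u (g x) x) (hg : ContinuousAt g x₀)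
    (h₁ : (g x₀).comp (.inl ℝ _ _) ≠ 0) (h₂ : (g x₀).comp (.inr ℝ _ _) ≠ 0) :
    Energy ρ Ω₁ Ω₂ θ₁ θ₂ (θ₁ + θ₂) u ≠ 0 := by
  obtain ⟨v, hv⟩ : ∃ v, g x₀ (v, 0) ≠ 0 := by simpa using DFunLike.ne_iff.1 h₁
  obtain ⟨w, hw⟩ : ∃ w, g x₀ (0, w) ≠ 0 := by simpa using DFunLike.ne_iff.1 h₂
  obtain ⟨c, hc, hvw⟩ := exists_mk_mem_partialCone hv hw
  obtain ⟨r, hr, hball⟩ : ∃ r > 0, ∀ x ∈ Metric.ball x₀ (2 * r),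
      x ∈ Ω₁ ×ˢ Ω₂ ∧ HasFDerivAt u (g x) x ∧ ‖g x - g x₀‖ ≤ c / 2 := by
    have hΩ' : ∀ᶠ x in 𝓝 x₀, x ∈ Ω₁ ×ˢ Ω₂ := hΩ
    obtain ⟨δ, hδ, h⟩ := Metric.eventually_nhds_iff_ball.1 (hΩ'.and (hderiv.and
      (hg.eventually (Metric.closedBall_mem_nhds (g x₀) (half_pos hc)))))
    refine ⟨δ / 2, half_pos hδ, fun x hx => ?_⟩
    rw [mul_div_cancel₀ _ two_ne_zero] at hx
    obtain ⟨hxΩ, hxd, hxg⟩ := h x hx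
    exact ⟨hxΩ, hxd, by rwa [dist_eq_norm] at hxg⟩
  have hD : Metric.ball x₀ r ⊆ tube Ω₁ r ×ˢ tube Ω₂ r := fun x hx =>
    ⟨fun ζ hζ => by
      simpa using (hball _ (add_mem_ball_two_mul hx (h := (ζ, 0)) (by simpa using hζ))).1.1,
     fun ζ hζ => by
      simpa using (hball _ (add_mem_ball_two_mul hx (h := (0, ζ)) (by simpa using hζ))).1.2⟩
  have hEeps := fun ε (hε : ε ∈ Ioc 0 r) =>
    le_eeps_of_forall_le (θ₁ := θ₁) (θ₂ := θ₂) (u := u) hρ.support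
      (isOpen_partialCone (g x₀) c).measurableSet Metric.isOpen_ball.measurableSet
      (fun t ht z => smul_mem_partialCone_iff (g x₀) c ht z) hD
      (fun z hz hzr x hx => rpow_le_integrand_of_mem_partialCone
        (fun y hy => (hball y hy).2) hc hθ₁ hθ₂ hz hzr hx) hε.1 hε.2
  have hlim := le_liminf_of_le (f := 𝓝[>] (0 : ℝ)) (by isBoundedDefault)
    (eventually_of_mem (Ioc_mem_nhdsGT hr) hEeps)
  refine ne_bot_of_le_ne_bot (mul_ne_zero ?_ (mul_ne_zero ?_ ?_)) hlim
  · exact setLIntegral_ne_zero_of_isOpen_cone_prod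
      (fun z w hzw => by rw [hρ.radial z w hzw])
      (by rw [← ofReal_integral_eq_lintegral_ofReal hρ.integrable (ae_of_all _ hρ.nonneg),
        hρ.total]; simp)
      (isOpen_partialCone _ _)
      (fun t ht z hz => (smul_mem_partialCone_iff _ _ ht z).2 hz) hvw
      (fun h => hv (by simpa [Prod.mk_zero_zero] using congrArg (fun z => g x₀ (z.1, 0)) h))
  · simpa using Real.rpow_pos_of_pos (half_pos hc) _
  · exact (Metric.measure_ball_pos _ _ hr).ne'

open Classical in
theorem ContinuousOn.exists_measurable_eqOn {α : Type*} [TopologicalSpace α]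
    [MeasurableSpace α] [OpensMeasurableSpace α] {f : α → ℝ} {s : Set α} (hf : ContinuousOn f s)
    (hs : MeasurableSet s) : ∃ f', Measurable f' ∧ EqOn f' f s :=
  ⟨s.piecewise f 0, hf.measurable_piecewise continuousOn_const hs,
    fun _ hx => piecewise_eq_of_mem _ _ _ hx⟩

theorem memS_of_eq_fst {Ω₁ : Set (Euc n₁)} {Ω₂ : Set (Euc n₂)} (hΩ₁ : MeasurableSet Ω₁)
    (hΩ₂ : MeasurableSet Ω₂) {u : Euc n₁ × Euc n₂ → ℝ} {f : Euc n₁ → ℝ}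
    (hf : ContinuousOn f Ω₁) (hu : ∀ x ∈ Ω₁ ×ˢ Ω₂, u x = f x.1) : memS Ω₁ Ω₂ u := by
  obtain ⟨f', hf', hff'⟩ := hf.exists_measurable_eqOn hΩ₁
  exact .inl ⟨f', hf', ae_restrict_of_forall_mem (hΩ₁.prod hΩ₂) fun x hx =>
    (hu x hx).trans (hff' hx.1).symm⟩

theorem memS_of_eq_snd {Ω₁ : Set (Euc n₁)} {Ω₂ : Set (Euc n₂)} (hΩ₁ : MeasurableSet Ω₁)
    (hΩ₂ : MeasurableSet Ω₂) {u : Euc n₁ × Euc n₂ → ℝ} {f : Euc n₂ → ℝ}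
    (hf : ContinuousOn f Ω₂) (hu : ∀ x ∈ Ω₁ ×ˢ Ω₂, u x = f x.2) : memS Ω₁ Ω₂ u := by
  obtain ⟨f', hf', hff'⟩ := hf.exists_measurable_eqOn hΩ₂
  exact .inr ⟨f', hf', ae_restrict_of_forall_mem (hΩ₁.prod hΩ₂) fun x hx =>
    (hu x hx).trans (hff' hx.2).symm⟩

theorem statement2_general {n₁ n₂ : ℕ}
    (Ω₁ : Set (Euc n₁)) (Ω₂ : Set (Euc n₂)) (hΩ₁ : GoodDomain Ω₁) (hΩ₂ : GoodDomain Ω₂)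
    (ρ : Euc n₁ × Euc n₂ → ℝ) (hρ : IsKernel ρ)
    (θ₁ θ₂ : ℝ) (hθ₁ : 0 < θ₁) (hθ₂ : 0 < θ₂)
    (u : Euc n₁ × Euc n₂ → ℝ)
    (g : Euc n₁ × Euc n₂ → (Euc n₁ × Euc n₂ →L[ℝ] ℝ))
    (hg_cont : ContinuousOn g (closure (Ω₁ ×ˢ Ω₂)))
    (hderiv : ∀ x ∈ Ω₁ ×ˢ Ω₂, HasFDerivAt u (g x) x)
    (hE : Energy ρ Ω₁ Ω₂ θ₁ θ₂ (θ₁ + θ₂) u = 0) :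
    memS Ω₁ Ω₂ u := by
  have hU : IsOpen (Ω₁ ×ˢ Ω₂) := hΩ₁.isOpen.prod hΩ₂.isOpen
  have hgU : ContinuousOn g (Ω₁ ×ˢ Ω₂) := hg_cont.mono subset_closure
  set d₁ := fun x => (g x).comp (ContinuousLinearMap.inl ℝ (Euc n₁) (Euc n₂))
  set d₂ := fun x => (g x).comp (ContinuousLinearMap.inr ℝ (Euc n₁) (Euc n₂))
  have hd₁ : ∀ x ∈ Ω₁ ×ˢ Ω₂, HasFDerivAt (fun y => u (y, x.2)) (d₁ x) x.1 := fun x hx =>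
    (hderiv x hx).comp x.1 (hasFDerivAt_prodMk_left x.1 x.2)
  have hd₂ : ∀ x ∈ Ω₁ ×ˢ Ω₂, HasFDerivAt (fun y => u (x.1, y)) (d₂ x) x.2 := fun x hx =>
    (hderiv x hx).comp x.2 (hasFDerivAt_prodMk_right x.1 x.2)
  have hdich : ∀ x ∈ Ω₁ ×ˢ Ω₂, d₁ x = 0 ∨ d₂ x = 0 := fun x hx => by
    by_contra! h
    exact energy_ne_zero_of_partials_ne_zero hρ hθ₁.le hθ₂.le (hU.mem_nhds hx)
      (eventually_of_mem (hU.mem_nhds hx) hderiv) (hgU.continuousAt (hU.mem_nhds hx)) h.1 h.2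
      hE
  rcases partial_eq_zero_of_dichotomy hΩ₁.isOpen hΩ₂.isOpen hΩ₁.connected.isPreconnected
    hΩ₂.connected.isPreconnected hd₁ hd₂ (hgU.clm_comp continuousOn_const)
    (hgU.clm_comp continuousOn_const) hdich with h | h
  · obtain ⟨b, hb⟩ := hΩ₁.nonempty
    exact memS_of_eq_snd hΩ₁.isOpen.measurableSet hΩ₂.isOpen.measurableSet
      (fun y hy => (hd₂ (b, y) ⟨hb, hy⟩).continuousAt.continuousWithinAt)
      (eq_of_partial_fst_eq_zero hΩ₁.isOpen hΩ₁.connected.isPreconnected hd₁ h hb)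
  · obtain ⟨b, hb⟩ := hΩ₂.nonempty
    exact memS_of_eq_fst hΩ₁.isOpen.measurableSet hΩ₂.isOpen.measurableSet
      (fun y hy => (hd₁ (y, b) ⟨hy, hb⟩).continuousAt.continuousWithinAt)
      (eq_of_partial_snd_eq_zero hΩ₂.isOpen hΩ₂.connected.isPreconnected hd₂ h hb)

/-- if `u` is `C¹`, with `u` and `∇u` extending continuously to the
closure of `Ω`, and `E_θ(u) = 0`, then `u ∈ S(Ω)`. -/
theorem statement2 {n₁ n₂ : ℕ} (hn₁ : 1 ≤ n₁) (hn₂ : 1 ≤ n₂)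
    (Ω₁ : Set (Euc n₁)) (Ω₂ : Set (Euc n₂)) (hΩ₁ : GoodDomain Ω₁) (hΩ₂ : GoodDomain Ω₂)
    (ρ : Euc n₁ × Euc n₂ → ℝ) (hρ : IsKernel ρ)
    (θ₁ θ₂ : ℝ) (hθ₁ : 0 < θ₁) (hθ₂ : 0 < θ₂)
    (u : Euc n₁ × Euc n₂ → ℝ)
    (g : Euc n₁ × Euc n₂ → (Euc n₁ × Euc n₂ →L[ℝ] ℝ))
    (hu_cont : ContinuousOn u (closure (Ω₁ ×ˢ Ω₂)))
    (hg_cont : ContinuousOn g (closure (Ω₁ ×ˢ Ω₂)))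
    (hderiv : ∀ x ∈ Ω₁ ×ˢ Ω₂, HasFDerivAt u (g x) x)
    (hE : Energy ρ Ω₁ Ω₂ θ₁ θ₂ (θ₁ + θ₂) u = 0) :
    memS Ω₁ Ω₂ u :=
  statement2_general Ω₁ Ω₂ hΩ₁ hΩ₂ ρ hρ θ₁ θ₂ hθ₁ hθ₂ u g hg_cont hderiv hE
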